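/- arXiv:2103.05097 — 2 statements merged into one kernel-verified Lean document; each statement's English description precedes it below -/
import Mathlib

section
/- Let K be a compact Hausdorff space that is scattered and not metrizable. Then cov(C(K)) = ℵ₁, where C(K) is the Banach space of continuous real-valued functions on K with the supremum norm. -/
open Cardinal Set

universe u v

noncomputable section

/-!
A countable union of hyperplanes of a Banach space is meagre, so by Baire's theorem the space is
not covered by countably many members of `H_σ`, and `cov ≥ ℵ₁`. Conversely, a scattered compact
space has no continuous map onto a nonempty perfect set, so every `f ∈ C(K)` has countable range.
Being compact Hausdorff and not metrizable, `K` is uncountable; hence for any `ℵ₁` points of `K`,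
every `f` takes the same value at two of them, i.e. lies in one of the `ℵ₁` hyperplanes
`{f | f a = f b}`.
-/

/-- A hyperplane of a normed space: the kernel of a nonzero continuous linear functional. -/
def IsHyperplane {X : Type u} [NormedAddCommGroup X] [NormedSpace ℝ X] (H : Set X) : Prop :=
  ∃ f : X →L[ℝ] ℝ, f ≠ 0 ∧ H = {x | f x = 0}

/-- Member of the σ-ideal generated by hyperplanes: covered by countably many hyperplanes. -/
def InHyperplaneIdeal {X : Type u} [NormedAddCommGroup X] [NormedSpace ℝ X] (Y : Set X) : Prop :=
  ∃ F : Set (Set X), F.Countable ∧ (∀ H ∈ F, IsHyperplane H) ∧ Y ⊆ ⋃₀ F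

/-- Additivity of the hyperplane σ-ideal. -/
def addH (X : Type u) [NormedAddCommGroup X] [NormedSpace ℝ X] : Cardinal.{u} :=
  sInf {c | ∃ F : Set (Set X), (∀ A ∈ F, InHyperplaneIdeal A) ∧
    ¬ InHyperplaneIdeal (⋃₀ F) ∧ #F = c}

/-- Covering number of the hyperplane σ-ideal. -/
def covH (X : Type u) [NormedAddCommGroup X] [NormedSpace ℝ X] : Cardinal.{u} :=
  sInf {c | ∃ F : Set (Set X), (∀ A ∈ F, InHyperplaneIdeal A) ∧ ⋃₀ F = Set.univ ∧ #F = c}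

/-- Uniformity of the hyperplane σ-ideal. -/
def nonH (X : Type u) [NormedAddCommGroup X] [NormedSpace ℝ X] : Cardinal.{u} :=
  sInf {c | ∃ Y : Set X, ¬ InHyperplaneIdeal Y ∧ #Y = c}

/-- Cofinality of the hyperplane σ-ideal. -/
def cofH (X : Type u) [NormedAddCommGroup X] [NormedSpace ℝ X] : Cardinal.{u} :=
  sInf {c | ∃ F : Set (Set X), (∀ A ∈ F, InHyperplaneIdeal A) ∧
    (∀ Y : Set X, InHyperplaneIdeal Y → ∃ A ∈ F, Y ⊆ A) ∧ #F = c}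

/-- Density of a topological space: least cardinality of a dense subset. -/
def densH (X : Type u) [TopologicalSpace X] : Cardinal.{u} :=
  sInf {c | ∃ D : Set X, Dense D ∧ #D = c}

/-- `cf([κ]^ω)`: least cardinality of a cofinal family of countable subsets of κ. -/
def cfCtblSubsets (κ : Cardinal.{u}) : Cardinal.{u} :=
  sInf {c | ∃ F : Set (Set κ.out), (∀ S ∈ F, S.Countable) ∧
    (∀ S : Set κ.out, S.Countable → ∃ T ∈ F, S ⊆ T) ∧ #F = c}

/-- A compact space has small diagonal. -/
def HasSmallDiagonal (K : Type u) [TopologicalSpace K] : Prop :=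
  ∀ A : Set (K × K), #A = Cardinal.aleph 1 → A ∩ Set.diagonal K = ∅ →
    ∃ B ⊆ A, ¬ B.Countable ∧ closure B ∩ Set.diagonal K = ∅

/-- A topological space is scattered. -/
def IsScattered (K : Type u) [TopologicalSpace K] : Prop :=
  ∀ S : Set K, S.Nonempty → ∃ x ∈ S, ∃ U : Set K, IsOpen U ∧ U ∩ S = {x}

section HyperplaneIdeal

variable {X : Type*} [NormedAddCommGroup X] [NormedSpace ℝ X]

theorem IsHyperplane.isNowhereDense {H : Set X} (hH : IsHyperplane H) : IsNowhereDense H := by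
  obtain ⟨φ, hφ, rfl⟩ := hH
  rw [(isClosed_eq φ.continuous continuous_const).isNowhereDense_iff, ← not_nonempty_iff_eq_empty]
  intro hint
  have hker : LinearMap.ker (φ : X →ₗ[ℝ] ℝ) = ⊤ := Submodule.eq_top_of_nonempty_interior' _ hint
  exact hφ (ContinuousLinearMap.coe_injective (LinearMap.ker_eq_top.mp hker))

theorem InHyperplaneIdeal.isMeagre {Y : Set X} (hY : InHyperplaneIdeal Y) : IsMeagre Y := by
  obtain ⟨F, hFc, hFh, hYF⟩ := hY
  exact isMeagre_iff_countable_union_isNowhereDense.mpr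
    ⟨F, fun H hH => (hFh H hH).isNowhereDense, hFc, hYF⟩

theorem IsHyperplane.inHyperplaneIdeal {H : Set X} (hH : IsHyperplane H) : InHyperplaneIdeal H :=
  ⟨{H}, countable_singleton H, by simpa using hH, by simp⟩

theorem aleph_one_le_mk_of_sUnion_eq_univ [CompleteSpace X] {F : Set (Set X)}
    (hF : ∀ A ∈ F, InHyperplaneIdeal A) (hcover : ⋃₀ F = Set.univ) : aleph 1 ≤ #F := by
  rw [aleph_one_le_iff, aleph0_lt_mk_iff, ← not_countable_iff]
  intro hF_countable
  have hmeagre : IsMeagre (⋃₀ F) := by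
    rw [sUnion_eq_iUnion]
    exact isMeagre_iUnion fun A => (hF A A.2).isMeagre
  rw [hcover] at hmeagre
  exact not_isMeagre_of_isOpen isOpen_univ univ_nonempty hmeagre

theorem covH_eq_aleph_one_of_sUnion_eq_univ [CompleteSpace X] {F : Set (Set X)}
    (hF : ∀ H ∈ F, IsHyperplane H) (hcover : ⋃₀ F = Set.univ) (hcard : #F ≤ aleph 1) :
    covH X = aleph 1 := by
  have hmem : ∃ G : Set (Set X), (∀ A ∈ G, InHyperplaneIdeal A) ∧ ⋃₀ G = Set.univ ∧ #G = #F :=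
    ⟨F, fun H hH => (hF H hH).inHyperplaneIdeal, hcover, rfl⟩
  have hcov_le : covH X ≤ #F := csInf_le' hmem
  refine le_antisymm (hcov_le.trans hcard) (le_csInf ⟨_, hmem⟩ ?_)
  rintro c ⟨G, hG, hGcover, rfl⟩
  exact aleph_one_le_mk_of_sUnion_eq_univ hG hGcover

end HyperplaneIdeal

section Scattered

variable {K α : Type*} [TopologicalSpace K] [CompactSpace K] [TopologicalSpace α]

theorem exists_minimal_isClosed_subset_image [T1Space α] {f : K → α} (hf : Continuous f)
    {D : Set α} (hD : D ⊆ range f) : ∃ E, Minimal (fun E => IsClosed E ∧ D ⊆ f '' E) E := by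
  suffices hchain : ∀ c ⊆ {E | IsClosed E ∧ D ⊆ f '' E}, IsChain (· ⊆ ·) c → c.Nonempty →
      ∃ lb ∈ {E | IsClosed E ∧ D ⊆ f '' E}, ∀ E ∈ c, lb ⊆ E by
    obtain ⟨E, -, hE⟩ := zorn_superset_nonempty _ hchain Set.univ ⟨isClosed_univ, image_univ ▸ hD⟩
    exact ⟨E, hE⟩
  intro c hc hchain hcne
  refine ⟨⋂₀ c, ⟨isClosed_sInter fun E hE => (hc hE).1, fun d hd => ?_⟩,
    fun E hE => sInter_subset_of_mem hE⟩
  have : Nonempty c := hcne.to_subtype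
  -- the fibres over `d` inside a chain form a directed family of nonempty compact sets
  obtain ⟨x, hx⟩ : (⋂ E : c, (E : Set K) ∩ f ⁻¹' {d}).Nonempty := by
    refine IsCompact.nonempty_iInter_of_directed_nonempty_isCompact_isClosed _ ?_ ?_
      (fun E => ((hc E.2).1.inter (isClosed_singleton.preimage hf)).isCompact)
      (fun E => (hc E.2).1.inter (isClosed_singleton.preimage hf))
    · intro E E'
      rcases hchain.total E.2 E'.2 with h | h
      · exact ⟨E, le_rfl, inter_subset_inter_left _ h⟩
      · exact ⟨E', inter_subset_inter_left _ h, le_rfl⟩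
    · intro E
      obtain ⟨x, hx, hfx⟩ := (hc E.2).2 hd
      exact ⟨x, hx, hfx⟩
  simp only [mem_iInter, mem_inter_iff, mem_preimage, mem_singleton_iff] at hx
  exact ⟨x, mem_sInter.mpr fun E hE => (hx ⟨E, hE⟩).1, (hx ⟨_, hcne.some_mem⟩).2⟩

theorem IsScattered.countable_range [T2Space α] [SecondCountableTopology α] (hK : IsScattered K)
    {f : K → α} (hf : Continuous f) : (range f).Countable := by
  by_contra hunc
  obtain ⟨D, hDperf, hDne, hDsub⟩ :=
    exists_perfect_nonempty_of_isClosed_of_not_countable (isCompact_range hf).isClosed hunc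
  obtain ⟨E, hE⟩ := exists_minimal_isClosed_subset_image hf hDsub
  obtain ⟨x, hxE, U, hU, hUE⟩ := hK E (hDne.mono hE.prop.2).of_image
  have hEU_closed : IsClosed (E \ U) := hE.prop.1.sdiff hU
  -- removing the isolated point `x` only loses `f x` from the image, which is not isolated in `D`
  have hD_image : D ⊆ f '' (E \ U) := by
    have hsub : D \ {f x} ⊆ f '' (E \ U) := by
      rintro _ ⟨hd, hne⟩
      obtain ⟨z, hz, rfl⟩ := hE.prop.2 hd
      refine ⟨z, ⟨hz, fun hzU => hne ?_⟩, rfl⟩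
      rw [show z = x from (hUE ▸ ⟨hzU, hz⟩ : z ∈ ({x} : Set K))]
      rfl
    intro d hd
    have hd_closure : d ∈ closure (D \ {f x}) := by
      rcases eq_or_ne d (f x) with rfl | hne
      · exact mem_closure_iff_clusterPt.mpr (accPt_principal_iff_clusterPt.mp (hDperf.acc _ hd))
      · exact subset_closure ⟨hd, hne⟩
    exact closure_minimal hsub ((hEU_closed.isCompact.image hf).isClosed) hd_closure
  have hxU : x ∈ U := (hUE ▸ rfl : x ∈ U ∩ E).1
  exact (hE.2 ⟨hEU_closed, hD_image⟩ sdiff_subset hxE).2 hxU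

end Scattered

section ContinuousFunctions

variable {K : Type*} [TopologicalSpace K]

theorem metrizableSpace_of_countable [CompactSpace K] [T35Space K] [Countable K] :
    TopologicalSpace.MetrizableSpace K := by
  choose f hf_cont hf_ne using fun p : {p : K × K // p.1 ≠ p.2} =>
    separatesPoints_continuous_of_t35Space p.2
  let := Encodable.ofCountable {p : K × K // p.1 ≠ p.2}
  exact Metric.PiNatEmbed.TopologicalSpace.MetrizableSpace.of_countable_separating f hf_cont
    fun x y hxy => ⟨⟨(x, y), hxy⟩, hf_ne _⟩

def evalEqHyperplanes (S : Set K) : Set (Set C(K, ℝ)) :=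
  (fun p : K × K => {f | f p.1 = f p.2}) '' S.offDiag

theorem mk_evalEqHyperplanes_le (S : Set K) : #(evalEqHyperplanes S) ≤ #S * #S :=
  calc #(evalEqHyperplanes S) ≤ #S.offDiag := mk_image_le
    _ ≤ #(S ×ˢ S) := mk_le_mk_of_subset fun p hp => ⟨hp.1, hp.2.1⟩
    _ = #S * #S := by rw [mk_setProd]

variable [CompactSpace K]

theorem isHyperplane_setOf_apply_eq [T35Space K] {a b : K} (hab : a ≠ b) :
    IsHyperplane {f : C(K, ℝ) | f a = f b} := by
  obtain ⟨g, hg, hgab⟩ := separatesPoints_continuous_of_t35Space hab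
  refine ⟨ContinuousMap.evalCLM ℝ a - ContinuousMap.evalCLM ℝ b, fun h => hgab ?_, ?_⟩
  · simpa [sub_eq_zero] using congrArg (fun φ => φ ⟨g, hg⟩) h
  · ext f
    simp [sub_eq_zero]

theorem isHyperplane_of_mem_evalEqHyperplanes [T35Space K] {S : Set K} {H : Set C(K, ℝ)}
    (hH : H ∈ evalEqHyperplanes S) : IsHyperplane H := by
  obtain ⟨p, ⟨-, -, hp⟩, rfl⟩ := hH
  exact isHyperplane_setOf_apply_eq hp

-- every `f` has countable range, so it is not injective on the uncountable set `S`
theorem IsScattered.sUnion_evalEqHyperplanes (hK : IsScattered K) {S : Set K}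
    (hS : ¬ S.Countable) : ⋃₀ evalEqHyperplanes S = Set.univ := by
  refine eq_univ_of_forall fun f => ?_
  obtain ⟨a, ha, b, hb, hfab, hab⟩ : ∃ a ∈ S, ∃ b ∈ S, f a = f b ∧ a ≠ b := by
    by_contra! hinj
    exact hS ((mapsTo_range f S).countable_of_injOn (fun a ha b hb => hinj a ha b hb)
      (hK.countable_range f.continuous))
  exact ⟨_, ⟨(a, b), ⟨ha, hb, hab⟩, rfl⟩, hfab⟩

end ContinuousFunctions

/-- for K compact Hausdorff, scattered and nonmetrizable, cov(C(K)) = ℵ₁. -/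
theorem stmt16 (K : Type u) [TopologicalSpace K] [CompactSpace K] [T2Space K]
    (hsc : IsScattered K) (hnm : ¬ TopologicalSpace.MetrizableSpace K) :
    covH C(K, ℝ) = Cardinal.aleph 1 := by
  have : Uncountable K := by
    by_contra! hK
    exact hnm metrizableSpace_of_countable
  obtain ⟨S, hS⟩ := le_mk_iff_exists_set.mp (aleph_one_le_iff.mpr (aleph0_lt_mk (α := K)))
  have hS_unc : ¬ S.Countable := by
    rw [← le_aleph0_iff_set_countable, hS, not_le]
    exact aleph0_lt_aleph_one
  refine covH_eq_aleph_one_of_sUnion_eq_univ (fun H => isHyperplane_of_mem_evalEqHyperplanes)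
    (hsc.sUnion_evalEqHyperplanes hS_unc) ?_
  calc #(evalEqHyperplanes S) ≤ #S * #S := mk_evalEqHyperplanes_le S
    _ = aleph 1 := by rw [hS, mul_eq_self aleph0_lt_aleph_one.le]

end
end

section
/- Let X be a real Banach space of dimension greater than 1 with uncountable density κ = dens(X). Suppose there is a family (x*_α)_{α<κ} of nonzero continuous linear functionals on X such that for every x ∈ X the set Z_x = {α < κ : x*_α(x) ≠ 0} is countable. Then non(X) = cf([κ]^ω). -/
open Cardinal Set

universe u v

noncomputable section

/-!
Lower bound: if `Y` is not covered by countably many hyperplanes, the supports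
`{i | f i y ≠ 0}`, `y ∈ Y`, are cofinal among the countable subsets of `ι`, because a countable
`S` contained in no support would give the cover `Y ⊆ ⋃ i ∈ S, ker (f i)`.

Upper bound: take a dense set `D` of size `κ` and a cofinal family `F` of countable subsets of `D`
of size `cf([κ]^ω)`. Enumerating `S ∈ F` as a bounded sequence `w`, the curve
`t ↦ ∑ tᵏ / k! • w k` is entire, so for every functional `g` not vanishing on `S` the real-analytic
function `t ↦ g (∑ tᵏ / k! • w k)` has only countably many zeros. Countably many hyperplanes are
each missed by some point of `D`, hence all of them by some `S ∈ F`, and so they cannot cover `ℵ₁`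
points of the curve of `S`. These points, for all `S ∈ F`, form a set outside `H_σ(X)` of size
`cf([κ]^ω) · ℵ₁ = cf([κ]^ω)`, as `ℵ₁ ≤ κ ≤ cf([κ]^ω)`.
-/

open scoped Nat

section

variable {X : Type u} [NormedAddCommGroup X] [NormedSpace ℝ X]

theorem inHyperplaneIdeal_iff {Y : Set X} :
    InHyperplaneIdeal Y ↔
      ∃ G : Set (X →L[ℝ] ℝ), G.Countable ∧ 0 ∉ G ∧ Y ⊆ ⋃ g ∈ G, {x | g x = 0} := by
  constructor
  · rintro ⟨F, hF, hhyp, hY⟩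
    choose! g hg0 hg using hhyp
    refine ⟨g '' F, hF.image g, fun ⟨H, hH, h0⟩ => hg0 H hH h0, fun y hy => ?_⟩
    obtain ⟨H, hH, hyH⟩ := hY hy
    rw [hg H hH] at hyH
    exact mem_biUnion (mem_image_of_mem g hH) hyH
  · rintro ⟨G, hG, h0, hY⟩
    refine ⟨(fun g => {x | g x = 0}) '' G, hG.image _, ?_, by rwa [sUnion_image]⟩
    rintro _ ⟨g, hg, rfl⟩
    exact ⟨g, ne_of_mem_of_not_mem hg h0, rfl⟩

theorem Dense.exists_apply_ne_zero {D : Set X} (hD : Dense D) {g : X →L[ℝ] ℝ} (hg : g ≠ 0) :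
    ∃ x ∈ D, g x ≠ 0 := by
  obtain ⟨x, hx⟩ : ∃ x, g x ≠ 0 := by
    by_contra! h
    exact hg (ContinuousLinearMap.ext h)
  exact hD.exists_mem_open (isOpen_ne_fun g.continuous continuous_const) ⟨x, hx⟩

theorem Dense.exists_bounded_separating_family {D : Set X} (hD : Dense D) :
    ∃ d : D → X, (∀ x, ‖d x‖ ≤ 1) ∧ ∀ g : X →L[ℝ] ℝ, g ≠ 0 → ∃ x, g (d x) ≠ 0 := by
  refine ⟨fun x => ‖(x : X)‖⁻¹ • (x : X), fun x => ?_, fun g hg => ?_⟩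
  · rw [norm_smul, norm_inv, norm_norm]
    exact inv_mul_le_one_of_le₀ le_rfl (norm_nonneg _)
  obtain ⟨x, hxD, hx⟩ := hD.exists_apply_ne_zero hg
  have : x ≠ 0 := by rintro rfl; simp at hx
  exact ⟨⟨x, hxD⟩, by simpa [this] using hx⟩

end

theorem AnalyticOnNhd.countable_preimage_zero {𝕜 E : Type*} [NontriviallyNormedField 𝕜]
    [SecondCountableTopology 𝕜] [ConnectedSpace 𝕜] [NormedAddCommGroup E] [NormedSpace 𝕜 E]
    {f : 𝕜 → E} (hf : AnalyticOnNhd 𝕜 f Set.univ) {x : 𝕜} (hx : f x ≠ 0) :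
    (f ⁻¹' {0}).Countable := by
  have := isDiscrete_of_codiscreteWithin (s := f ⁻¹' {0}) (hf.preimage_zero_mem_codiscrete hx)
  rw [inter_univ] at this
  exact (HereditarilyLindelofSpace.isLindelof _).countable_of_isDiscrete this

section ExpCurve

variable {E : Type*} [NormedAddCommGroup E] [NormedSpace ℝ E] {w : ℕ → E}

def expCurve (w : ℕ → E) (t : ℝ) : E := ∑' k, (t ^ k / k !) • w k

def expCurveSeries (w : ℕ → E) : FormalMultilinearSeries ℝ ℝ E :=
  fun k => ContinuousMultilinearMap.mkPiRing ℝ (Fin k) ((k ! : ℝ)⁻¹ • w k)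

theorem expCurveSeries_apply (k : ℕ) (t : ℝ) :
    expCurveSeries w k (fun _ => t) = (t ^ k / k !) • w k := by
  simp [expCurveSeries, smul_smul, div_eq_mul_inv]

theorem expCurveSeries_radius_eq_top (hw : ∀ k, ‖w k‖ ≤ 1) : (expCurveSeries w).radius = ⊤ := by
  refine (expCurveSeries w).radius_eq_top_of_summable_norm fun r => ?_
  refine (Real.summable_pow_div_factorial r).of_nonneg_of_le (fun k => by positivity) fun k => ?_
  have : ‖expCurveSeries w k‖ ≤ (k ! : ℝ)⁻¹ := by
    rw [expCurveSeries, ContinuousMultilinearMap.norm_mkPiRing, norm_smul, norm_inv,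
      RCLike.norm_natCast]
    exact mul_le_of_le_one_right (by positivity) (hw k)
  calc ‖expCurveSeries w k‖ * (r : ℝ) ^ k ≤ (k ! : ℝ)⁻¹ * (r : ℝ) ^ k := by gcongr
    _ = (r : ℝ) ^ k / k ! := by ring

theorem hasFPowerSeriesOnBall_expCurve [CompleteSpace E] (hw : ∀ k, ‖w k‖ ≤ 1) :
    HasFPowerSeriesOnBall (expCurve w) (expCurveSeries w) 0 ⊤ := by
  have hsum : (expCurveSeries w).sum = expCurve w :=
    funext fun t => tsum_congr fun k => expCurveSeries_apply k t
  rw [← hsum, ← expCurveSeries_radius_eq_top hw]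
  exact (expCurveSeries w).hasFPowerSeriesOnBall (by simp [expCurveSeries_radius_eq_top hw])

theorem countable_setOf_expCurve_eq_zero [CompleteSpace E] (hw : ∀ k, ‖w k‖ ≤ 1)
    {g : E →L[ℝ] ℝ} {k : ℕ} (hk : g (w k) ≠ 0) : {t | g (expCurve w t) = 0}.Countable := by
  have hg := g.comp_hasFPowerSeriesOnBall (hasFPowerSeriesOnBall_expCurve hw)
  obtain ⟨t, ht⟩ : ∃ t, g (expCurve w t) ≠ 0 := by
    by_contra! h
    have h0 : g ∘ expCurve w = 0 := funext h
    rw [h0] at hg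
    have := congr($(hg.hasFPowerSeriesAt.eq_zero) k fun _ => 1)
    simp only [ContinuousLinearMap.compFormalMultilinearSeries_apply,
      ContinuousLinearMap.compContinuousMultilinearMap_coe, Function.comp_apply,
      expCurveSeries_apply, one_pow, one_div, map_smul, smul_eq_mul,
      FormalMultilinearSeries.zero_apply, zero_apply, mul_eq_zero,
      inv_eq_zero, Nat.cast_eq_zero] at this
    exact hk (this.resolve_left k.factorial_ne_zero)
  exact AnalyticOnNhd.countable_preimage_zero (f := g ∘ expCurve w)
    (fun x _ => hg.analyticAt_of_mem (by simp)) ht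

end ExpCurve

section CountableCofinal

variable {α β : Type u} {F : Set (Set α)}

def IsCountableCofinal (F : Set (Set α)) : Prop :=
  (∀ S ∈ F, S.Countable) ∧ ∀ S : Set α, S.Countable → ∃ T ∈ F, S ⊆ T

theorem isCountableCofinal_setOf_countable : IsCountableCofinal {S : Set α | S.Countable} :=
  ⟨fun _ hS => hS, fun S hS => ⟨S, hS, subset_rfl⟩⟩

theorem IsCountableCofinal.image_image (hF : IsCountableCofinal F) (e : α ≃ β) :
    IsCountableCofinal (image e '' F) := by
  refine ⟨?_, fun S hS => ?_⟩
  · rintro _ ⟨T, hT, rfl⟩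
    exact (hF.1 T hT).image e
  · obtain ⟨T, hT, hST⟩ := hF.2 (e.symm '' S) (hS.image _)
    refine ⟨e '' T, mem_image_of_mem _ hT, ?_⟩
    rw [← e.symm_image_subset]
    exact hST

theorem IsCountableCofinal.card_le (hF : IsCountableCofinal F) (hα : ℵ₀ < #α) : #α ≤ #F := by
  choose T hTF hT using fun a : α => hF.2 {a} (countable_singleton a)
  have hfib : ∀ S : F, #((fun a => (⟨T a, hTF a⟩ : F)) ⁻¹' {S}) ≤ ℵ₀ := by
    intro S
    refine mk_le_aleph0_iff.2 (((hF.1 S S.2).mono ?_).to_subtype)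
    rintro a rfl
    exact hT a rfl
  have := (mk_le_mk_mul_of_mk_preimage_le _ hfib).trans (mul_le_max_of_aleph0_le_right le_rfl)
  exact (le_max_iff.1 this).resolve_right hα.not_ge

theorem cfCtblSubsets_eq_sInf (κ : Cardinal.{u}) :
    cfCtblSubsets κ = sInf {c | ∃ F : Set (Set κ.out), IsCountableCofinal F ∧ #F = c} := by
  simp only [cfCtblSubsets, IsCountableCofinal, and_assoc]

theorem cfCtblSubsets_le_card {κ : Cardinal.{u}} (hα : #α = κ) (hF : IsCountableCofinal F) :
    cfCtblSubsets κ ≤ #F := by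
  obtain ⟨e⟩ : Nonempty (α ≃ κ.out) := Cardinal.eq.1 (by rw [hα, mk_out])
  rw [cfCtblSubsets_eq_sInf]
  refine (csInf_le' (a := #(image e '' F)) ?_).trans mk_image_le
  exact ⟨_, hF.image_image e, rfl⟩

theorem exists_isCountableCofinal_card_eq {κ : Cardinal.{u}} (hα : #α = κ) :
    ∃ F : Set (Set α), IsCountableCofinal F ∧ #F = cfCtblSubsets κ := by
  obtain ⟨F, hF, hFκ⟩ : ∃ F : Set (Set κ.out), IsCountableCofinal F ∧ #F = cfCtblSubsets κ := by
    rw [cfCtblSubsets_eq_sInf]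
    exact csInf_mem (s := {c | ∃ F : Set (Set κ.out), IsCountableCofinal F ∧ #F = c})
      ⟨_, _, isCountableCofinal_setOf_countable, rfl⟩
  obtain ⟨e⟩ : Nonempty (κ.out ≃ α) := Cardinal.eq.1 (by rw [hα, mk_out])
  have hF' := hF.image_image e
  exact ⟨_, hF', le_antisymm (mk_image_le.trans hFκ.le) (cfCtblSubsets_le_card hα hF')⟩

theorem le_cfCtblSubsets {κ : Cardinal.{u}} (hκ : ℵ₀ < κ) : κ ≤ cfCtblSubsets κ := by
  obtain ⟨F, hF, hFκ⟩ := exists_isCountableCofinal_card_eq (mk_out κ)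
  calc κ = #κ.out := (mk_out κ).symm
    _ ≤ #F := hF.card_le (by rwa [mk_out])
    _ = cfCtblSubsets κ := hFκ

end CountableCofinal

theorem exists_dense_card_eq_densH (X : Type u) [TopologicalSpace X] :
    ∃ D : Set X, Dense D ∧ #D = densH X :=
  csInf_mem (s := {c | ∃ D : Set X, Dense D ∧ #D = c}) ⟨_, univ, dense_univ, rfl⟩

section

variable {X : Type u} [NormedAddCommGroup X] [NormedSpace ℝ X]

theorem isCountableCofinal_range_support {ι : Type u} {f : ι → X →L[ℝ] ℝ} (hne : ∀ i, f i ≠ 0)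
    (hc : ∀ x : X, {i : ι | f i x ≠ 0}.Countable) {Y : Set X} (hY : ¬ InHyperplaneIdeal Y) :
    IsCountableCofinal (range fun y : Y => {i | f i y ≠ 0}) := by
  refine ⟨fun _ ⟨y, hy⟩ => hy ▸ hc y, fun S hS => ?_⟩
  by_contra! h
  refine hY (inHyperplaneIdeal_iff.2 ⟨f '' S, hS.image f, fun ⟨i, _, hi⟩ => hne i hi, ?_⟩)
  intro y hy
  obtain ⟨i, hiS, hi⟩ := not_subset.1 (h _ ⟨⟨y, hy⟩, rfl⟩)
  exact mem_biUnion (mem_image_of_mem f hiS) (not_not.1 hi)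

theorem not_inHyperplaneIdeal_range_expCurve [CompleteSpace X] {ι : Type*} {w : ι → ℕ → X}
    (hw : ∀ i k, ‖w i k‖ ≤ 1)
    (hsep : ∀ G : Set (X →L[ℝ] ℝ), G.Countable → 0 ∉ G → ∃ i, ∀ g ∈ G, ∃ k, g (w i k) ≠ 0)
    {T : Set ℝ} (hT : ¬ T.Countable) :
    ¬ InHyperplaneIdeal (range fun p : ι × T => expCurve (w p.1) p.2) := by
  intro h
  obtain ⟨G, hG, h0, hY⟩ := inHyperplaneIdeal_iff.1 h
  obtain ⟨i, hi⟩ := hsep G hG h0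
  have hZ : (⋃ g ∈ G, {t | g (expCurve (w i) t) = 0}).Countable :=
    hG.biUnion fun g hg => (hi g hg).elim fun _ hk => countable_setOf_expCurve_eq_zero (hw i) hk
  obtain ⟨t, htT, ht⟩ := not_subset.1 fun h => hT (hZ.mono h)
  obtain ⟨g, hg, hgt⟩ := mem_iUnion₂.1 (hY ⟨(i, ⟨t, htT⟩), rfl⟩)
  exact ht (mem_iUnion₂.2 ⟨g, hg, hgt⟩)

theorem exists_not_inHyperplaneIdeal_card_le [CompleteSpace X] {α : Type u} [Nonempty α]
    {d : α → X} (hd : ∀ a, ‖d a‖ ≤ 1) (hsep : ∀ g : X →L[ℝ] ℝ, g ≠ 0 → ∃ a, g (d a) ≠ 0)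
    {F : Set (Set α)} (hF : IsCountableCofinal F) :
    ∃ Y : Set X, ¬ InHyperplaneIdeal Y ∧ #Y ≤ #F * ℵ₁ := by
  obtain ⟨T, hT⟩ : ∃ T : Set ℝ, #T = ℵ₁ :=
    le_mk_iff_exists_set.1 (by rw [mk_real]; exact aleph_one_le_continuum)
  choose e he using fun S : F => countable_iff_exists_subset_range.1 (hF.1 S S.2)
  refine ⟨_, not_inHyperplaneIdeal_range_expCurve (w := fun S => d ∘ e S) (fun _ _ => hd _)
    (fun G hG h0 => ?_) (T := T) ?_, ?_⟩
  · choose! a ha using fun g (hg : g ∈ G) => hsep g (ne_of_mem_of_not_mem hg h0)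
    obtain ⟨S, hSF, hS⟩ := hF.2 (a '' G) (hG.image a)
    refine ⟨⟨S, hSF⟩, fun g hg => ?_⟩
    obtain ⟨k, hk⟩ := he ⟨S, hSF⟩ (hS (mem_image_of_mem a hg))
    exact ⟨k, by simpa [hk] using ha g hg⟩
  · rw [← le_aleph0_iff_set_countable, hT, not_le]
    exact aleph0_lt_aleph_one
  · refine mk_range_le.trans ?_
    simp [mk_prod, hT]

end

theorem stmt18_general (X : Type u) [NormedAddCommGroup X] [NormedSpace ℝ X] [CompleteSpace X]
    (hunc : Cardinal.aleph0 < densH X)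
    (ι : Type u) (hι : #ι = densH X)
    (f : ι → X →L[ℝ] ℝ) (hne : ∀ i, f i ≠ 0)
    (hc : ∀ x : X, {i : ι | f i x ≠ 0}.Countable) :
    nonH X = cfCtblSubsets (densH X) := by
  obtain ⟨D, hD, hDκ⟩ := exists_dense_card_eq_densH X
  have : Nonempty D := mk_ne_zero_iff.1 (hDκ ▸ (aleph0_pos.trans hunc).ne')
  obtain ⟨d, hd, hsep⟩ := hD.exists_bounded_separating_family
  obtain ⟨F, hF, hFκ⟩ := exists_isCountableCofinal_card_eq hDκ
  obtain ⟨Y₀, hY₀, hY₀F⟩ := exists_not_inHyperplaneIdeal_card_le hd hsep hF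
  have hκ := le_cfCtblSubsets hunc
  apply le_antisymm
  · calc nonH X ≤ #Y₀ := csInf_le' ⟨Y₀, hY₀, rfl⟩
      _ ≤ #F * ℵ₁ := hY₀F
      _ = cfCtblSubsets (densH X) := by
        rw [hFκ, Cardinal.mul_eq_left (hunc.le.trans hκ) ((aleph_one_le_iff.2 hunc).trans hκ)
          (aleph_pos 1).ne']
  · refine le_csInf ⟨_, Y₀, hY₀, rfl⟩ ?_
    rintro _ ⟨Y, hY, rfl⟩
    exact (cfCtblSubsets_le_card hι (isCountableCofinal_range_support hne hc hY)).trans mk_range_le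

/-- a κ-family of nonzero functionals (κ = dens(X) uncountable), each vector
killing all but countably many, gives non(X) = cf([κ]^ω). -/
theorem stmt18 (X : Type u) [NormedAddCommGroup X] [NormedSpace ℝ X] [CompleteSpace X]
    (hdim : 1 < Module.rank ℝ X) (hunc : Cardinal.aleph0 < densH X)
    (ι : Type u) (hι : #ι = densH X)
    (f : ι → X →L[ℝ] ℝ) (hne : ∀ i, f i ≠ 0)
    (hc : ∀ x : X, {i : ι | f i x ≠ 0}.Countable) :
    nonH X = cfCtblSubsets (densH X) :=
  stmt18_general X hunc ι hι f hne hc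
end
end
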